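/- arXiv:2605.17425 — 4 statements merged into one kernel-verified Lean document; each statement's English description precedes it below -/
import Mathlib

section
/- With h_M as above and v_M the unique root of h_M in (0, v̄): for each fixed v ∈ [0, v̄), the map M ↦ h_M(v) is strictly decreasing in M on the set where F < 1 below v̄, and consequently the sequence of cutoffs v_M is strictly increasing in M. -/
open MeasureTheory intervalIntegral Set

/-- For fixed `v ∈ [0, v̄)`, `M ↦ h_M(v)` is strictly decreasing in `M`,
and consequently the cutoffs `v_M` are strictly increasing in `M`. -/
theorem cutoff_strictMono_in_M
    (p vbar : ℝ) (hp : 0 < p) (hpv : p < vbar)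
    (F : ℝ → ℝ)
    (hFcont : ContinuousOn F (Set.Icc 0 vbar))
    (hFmono : MonotoneOn F (Set.Icc 0 vbar))
    (hF0 : F 0 = 0) (hF1 : F vbar = 1)
    (hFlt : ∀ u, 0 ≤ u → u < vbar → F u < 1)
    (h : ℕ → ℝ → ℝ)
    (hh : ∀ M : ℕ, ∀ v : ℝ, h M v =
      v - p - ∫ u in v..vbar, (Real.exp ((1 - F u) * ((M : ℝ) - 1)) - 1))
    (vM : ℕ → ℝ)
    (hvM : ∀ M : ℕ, 2 ≤ M → vM M ∈ Set.Ioo 0 vbar ∧ h M (vM M) = 0) :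
    (∀ v : ℝ, 0 ≤ v → v < vbar →
      ∀ M N : ℕ, 2 ≤ M → M < N → h N v < h M v) ∧
    (∀ M N : ℕ, 2 ≤ M → M < N → vM M < vM N) := by
  have hvbar : (0:ℝ) < vbar := hp.trans hpv
  set g : ℕ → ℝ → ℝ := fun M u => Real.exp ((1 - F u) * ((M:ℝ) - 1)) - 1 with hgdef
  have gcont : ∀ M : ℕ, ContinuousOn (g M) (Set.Icc 0 vbar) := by
    intro M
    exact (Real.continuous_exp.comp_continuousOn
      ((continuousOn_const.sub hFcont).mul continuousOn_const)).sub continuousOn_const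
  have hFle1 : ∀ u ∈ Set.Icc (0:ℝ) vbar, F u ≤ 1 := by
    intro u hu
    calc F u ≤ F vbar := hFmono hu ⟨hvbar.le, le_refl _⟩ hu.2
    _ = 1 := hF1
  have gnonneg : ∀ M : ℕ, 1 ≤ M → ∀ u ∈ Set.Icc (0:ℝ) vbar, 0 ≤ g M u := by
    intro M hM u hu
    have h1 : (0:ℝ) ≤ 1 - F u := sub_nonneg.2 (hFle1 u hu)
    have h2 : (0:ℝ) ≤ (M:ℝ) - 1 := by
      have : (1:ℝ) ≤ M := by exact_mod_cast hM
      linarith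
    simpa [hgdef] using Real.one_le_exp (mul_nonneg h1 h2)
  have gle : ∀ M N : ℕ, M ≤ N → ∀ u ∈ Set.Icc (0:ℝ) vbar, g M u ≤ g N u := by
    intro M N hMN u hu
    have h1 : (0:ℝ) ≤ 1 - F u := sub_nonneg.2 (hFle1 u hu)
    have h2 : ((M:ℝ) - 1) ≤ ((N:ℝ) - 1) := by
      have : (M:ℝ) ≤ N := by exact_mod_cast hMN
      linarith
    exact sub_le_sub_right (Real.exp_le_exp.2 (mul_le_mul_of_nonneg_left h2 h1)) _
  have gstrict : ∀ u, 0 ≤ u → u < vbar → ∀ M N : ℕ, M < N → g M u < g N u := by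
    intro u h0 h1 M N hMN
    have hF : (0:ℝ) < 1 - F u := sub_pos.2 (hFlt u h0 h1)
    have h2 : ((M:ℝ) - 1) < ((N:ℝ) - 1) := by
      have : (M:ℝ) < N := by exact_mod_cast hMN
      linarith
    exact sub_lt_sub_right (Real.exp_lt_exp.2 (mul_lt_mul_of_pos_left h2 hF)) _
  have part1 : ∀ v : ℝ, 0 ≤ v → v < vbar →
      ∀ M N : ℕ, 2 ≤ M → M < N → h N v < h M v := by
    intro v hv0 hv M N hM hMN
    have hsub : Set.Icc v vbar ⊆ Set.Icc 0 vbar := Set.Icc_subset_Icc hv0 (le_refl _)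
    have key : (∫ u in v..vbar, g M u) < ∫ u in v..vbar, g N u := by
      apply intervalIntegral.integral_lt_integral_of_continuousOn_of_le_of_exists_lt hv
        ((gcont M).mono hsub) ((gcont N).mono hsub)
      · intro x hx
        exact gle M N hMN.le x (hsub ⟨hx.1.le, hx.2⟩)
      · exact ⟨v, ⟨le_refl _, hv.le⟩, gstrict v hv0 hv M N hMN⟩
    rw [hh M v, hh N v]
    simp only [hgdef] at key
    linarith
  refine ⟨part1, ?_⟩
  intro M N hM hMN
  obtain ⟨hM1, hM2⟩ := hvM M hM
  obtain ⟨hN1, hN2⟩ := hvM N (hM.trans hMN.le)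
  by_contra hcon
  push_neg at hcon
  -- hcon : vM N ≤ vM M
  have hlt : h N (vM M) < 0 := by
    rw [← hM2]; exact part1 (vM M) hM1.1.le hM1.2 M N hM hMN
  have hN1le : (1:ℕ) ≤ N := le_trans (by norm_num) (hM.trans hMN.le)
  -- split the integral
  have hint1 : IntervalIntegrable (g N) volume (vM N) (vM M) :=
    ((gcont N).mono (Set.Icc_subset_Icc hN1.1.le hM1.2.le)).intervalIntegrable_of_Icc hcon
  have hint2 : IntervalIntegrable (g N) volume (vM M) vbar :=
    ((gcont N).mono (Set.Icc_subset_Icc hM1.1.le (le_refl _))).intervalIntegrable_of_Icc hM1.2.le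
  have hsplit : (∫ u in (vM N)..(vM M), g N u) + (∫ u in (vM M)..vbar, g N u)
      = ∫ u in (vM N)..vbar, g N u :=
    intervalIntegral.integral_add_adjacent_intervals hint1 hint2
  have hnn : 0 ≤ ∫ u in (vM N)..(vM M), g N u := by
    apply intervalIntegral.integral_nonneg hcon
    intro u hu
    exact gnonneg N hN1le u ⟨hN1.1.le.trans hu.1, hu.2.trans hM1.2.le⟩
  have e1 := hh N (vM M)
  have e2 := hh N (vM N)
  simp only [hgdef] at hsplit hnn
  rw [e1] at hlt
  rw [e2] at hN2
  linarith
end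

section
/- With the cutoffs v_M defined as the unique roots of h_M(v) = v - π - ∫_v^{v̄}(e^{(1-F(u))(M-1)} - 1) du, one has lim_{M→∞} v_M = v̄. -/
open MeasureTheory intervalIntegral Set Filter

/-- The cutoffs `v_M`, defined as unique roots of
`h_M(v) = v - p - ∫_v^{v̄}(e^{(1-F(u))(M-1)} - 1) du`, converge to `v̄` as `M → ∞`. -/
theorem cutoff_tendsto_vbar
    (p vbar : ℝ) (hp : 0 < p) (hpv : p < vbar)
    (F : ℝ → ℝ)
    (hFcont : ContinuousOn F (Set.Icc 0 vbar))
    (hFmono : MonotoneOn F (Set.Icc 0 vbar))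
    (hF0 : F 0 = 0) (hF1 : F vbar = 1)
    (hFlt : ∀ u, 0 ≤ u → u < vbar → F u < 1)
    (h : ℕ → ℝ → ℝ)
    (hh : ∀ M : ℕ, ∀ v : ℝ, h M v =
      v - p - ∫ u in v..vbar, (Real.exp ((1 - F u) * ((M : ℝ) - 1)) - 1))
    (vM : ℕ → ℝ)
    (hvM : ∀ M : ℕ, 2 ≤ M → vM M ∈ Set.Ioo 0 vbar ∧ h M (vM M) = 0) :
    Filter.Tendsto vM Filter.atTop (nhds vbar) := by
  rw [Metric.tendsto_atTop]
  intro ε hε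
  -- set up the interval [b1, b2] ⊂ [0, vbar)
  set b1 : ℝ := max 0 (vbar - ε) with hb1def
  set b2 : ℝ := (b1 + vbar) / 2 with hb2def
  have hvbar0 : 0 < vbar := hp.trans hpv
  have hb1nn : 0 ≤ b1 := le_max_left _ _
  have hb1lt : b1 < vbar := by
    apply max_lt hvbar0; linarith
  have hb1lt2 : b1 < b2 := by rw [hb2def]; linarith
  have hb2lt : b2 < vbar := by rw [hb2def]; linarith
  have hb2nn : 0 ≤ b2 := hb1nn.trans hb1lt2.le
  set c : ℝ := 1 - F b2 with hcdef
  have hc : 0 < c := by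
    have := hFlt b2 hb2nn hb2lt; linarith
  -- the quantity (b2 - b1) * (exp (c * (M - 1)) - 1) tends to infinity
  have htend : Tendsto (fun M : ℕ => (b2 - b1) * (Real.exp (c * ((M : ℝ) - 1)) - 1))
      atTop atTop := by
    have h1 : Tendsto (fun M : ℕ => c * ((M : ℝ) - 1)) atTop atTop := by
      apply Tendsto.const_mul_atTop hc
      simpa [sub_eq_add_neg] using
        tendsto_atTop_add_const_right atTop (-1 : ℝ) tendsto_natCast_atTop_atTop
    have h2 : Tendsto (fun M : ℕ => Real.exp (c * ((M : ℝ) - 1))) atTop atTop :=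
      Real.tendsto_exp_atTop.comp h1
    have h3 : Tendsto (fun M : ℕ => Real.exp (c * ((M : ℝ) - 1)) - 1) atTop atTop := by
      simpa [sub_eq_add_neg] using tendsto_atTop_add_const_right atTop (-1 : ℝ) h2
    exact Tendsto.const_mul_atTop (by linarith) h3
  have hev : ∀ᶠ M : ℕ in atTop,
      vbar - p < (b2 - b1) * (Real.exp (c * ((M : ℝ) - 1)) - 1) :=
    htend.eventually_gt_atTop (vbar - p)
  obtain ⟨N0, hN0⟩ := eventually_atTop.mp hev
  refine ⟨max N0 2, fun M hM => ?_⟩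
  have hM2 : 2 ≤ M := le_trans (le_max_right _ _) hM
  have hMN0 : N0 ≤ M := le_trans (le_max_left _ _) hM
  obtain ⟨⟨hv0, hvlt⟩, hroot⟩ := hvM M hM2
  have hM1 : (0:ℝ) ≤ (M : ℝ) - 1 := by
    have : (2:ℝ) ≤ (M:ℝ) := by exact_mod_cast hM2
    linarith
  -- claim : b1 < vM M
  have hkey : b1 < vM M := by
    by_contra hcon
    push_neg at hcon
    -- the integrand is nonneg on [vM M, vbar]
    have hnn : ∀ u ∈ Set.Icc (vM M) vbar,
        0 ≤ Real.exp ((1 - F u) * ((M : ℝ) - 1)) - 1 := by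
      intro u hu
      have hu0 : 0 ≤ u := le_trans hv0.le hu.1
      have huI : u ∈ Set.Icc 0 vbar := ⟨hu0, hu.2⟩
      have : F u ≤ 1 := by
        have := hFmono huI (Set.right_mem_Icc.mpr hvbar0.le) hu.2
        rwa [hF1] at this
      have : 0 ≤ (1 - F u) * ((M : ℝ) - 1) := mul_nonneg (by linarith) hM1
      have := Real.one_le_exp this
      linarith
    -- integrability on [vM M, vbar]
    have hconti : ContinuousOn (fun u => Real.exp ((1 - F u) * ((M : ℝ) - 1)) - 1)
        (Set.Icc (vM M) vbar) := by
      apply ContinuousOn.sub _ continuousOn_const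
      apply Real.continuous_exp.comp_continuousOn
      apply ContinuousOn.mul _ continuousOn_const
      apply ContinuousOn.sub continuousOn_const
      exact hFcont.mono (Set.Icc_subset_Icc hv0.le le_rfl)
    have hint : IntervalIntegrable (fun u => Real.exp ((1 - F u) * ((M : ℝ) - 1)) - 1)
        volume (vM M) vbar := by
      apply ContinuousOn.intervalIntegrable
      rwa [Set.uIcc_of_le hvlt.le]
    -- the root equation gives the value of the integral
    have hIeq : (∫ u in (vM M)..vbar, (Real.exp ((1 - F u) * ((M : ℝ) - 1)) - 1))
        = vM M - p := by
      have := hh M (vM M); rw [hroot] at this; linarith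
    -- lower bound: integral over [b1, b2] ≤ integral over [vM M, vbar]
    have hmono : (∫ u in b1..b2, (Real.exp ((1 - F u) * ((M : ℝ) - 1)) - 1))
        ≤ ∫ u in (vM M)..vbar, (Real.exp ((1 - F u) * ((M : ℝ) - 1)) - 1) := by
      apply intervalIntegral.integral_mono_interval hcon hb1lt2.le hb2lt.le
      · exact (MeasureTheory.ae_restrict_iff' measurableSet_Ioc).mpr
          (Filter.Eventually.of_forall fun u hu => hnn u ⟨hu.1.le, hu.2⟩)
      · exact hint
    -- lower bound of integral over [b1, b2] by a constant
    have hconst : (b2 - b1) * (Real.exp (c * ((M : ℝ) - 1)) - 1)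
        ≤ ∫ u in b1..b2, (Real.exp ((1 - F u) * ((M : ℝ) - 1)) - 1) := by
      have : ∀ u ∈ Set.Icc b1 b2,
          Real.exp (c * ((M : ℝ) - 1)) - 1 ≤ Real.exp ((1 - F u) * ((M : ℝ) - 1)) - 1 := by
        intro u hu
        have huI : u ∈ Set.Icc 0 vbar := ⟨hb1nn.trans hu.1, hu.2.trans hb2lt.le⟩
        have hFu : F u ≤ F b2 := hFmono huI ⟨hb2nn, hb2lt.le⟩ hu.2
        have : c * ((M : ℝ) - 1) ≤ (1 - F u) * ((M : ℝ) - 1) := by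
          apply mul_le_mul_of_nonneg_right _ hM1
          rw [hcdef]; linarith
        have := Real.exp_le_exp.mpr this
        linarith
      calc (b2 - b1) * (Real.exp (c * ((M : ℝ) - 1)) - 1)
          = ∫ _ in b1..b2, (Real.exp (c * ((M : ℝ) - 1)) - 1) := by
            rw [intervalIntegral.integral_const, smul_eq_mul]
        _ ≤ _ := by
            apply intervalIntegral.integral_mono_on hb1lt2.le
              intervalIntegrable_const
              (hint.mono_set (by
                rw [Set.uIcc_of_le hb1lt2.le, Set.uIcc_of_le hvlt.le]
                exact Set.Icc_subset_Icc hcon hb2lt.le))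
              this
    have := hN0 M hMN0
    linarith
  -- conclude
  have hlb : vbar - ε < vM M := by
    have : vbar - ε ≤ b1 := le_max_right _ _
    linarith
  rw [Real.dist_eq, abs_of_neg (by linarith : vM M - vbar < 0)]
  linarith
end

section
/- Suppose the cutoff sequence v_M satisfies v_M - π = ∫_{v_M}^{v̄}(e^{(M-1)(1-F(u))} - 1) du and v_M → v̄ with v_M ↛ π. Then (M-1)(1 - F(v_M)) → ∞ as M → ∞. -/
open MeasureTheory intervalIntegral Set Filter

/-- If the cutoffs `v_M` satisfy the cutoff identity
`v_M - p = ∫_{v_M}^{v̄}(e^{(M-1)(1-F(u))} - 1) du` and `v_M → v̄ > p`, then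
`(M-1)(1 - F(v_M)) → ∞`. -/
theorem cutoff_tail_mass_diverges
    (p vbar : ℝ) (hp : 0 < p) (hpv : p < vbar)
    (F : ℝ → ℝ)
    (hFcont : ContinuousOn F (Set.Icc 0 vbar))
    (hFmono : MonotoneOn F (Set.Icc 0 vbar))
    (hFle : ∀ u ∈ Set.Icc 0 vbar, F u ≤ 1)
    (vM : ℕ → ℝ)
    (hvM : ∀ M : ℕ, 2 ≤ M → vM M ∈ Set.Ioo p vbar)
    (hcutoff : ∀ M : ℕ, 2 ≤ M →
      vM M - p = ∫ u in (vM M)..vbar, (Real.exp (((M : ℝ) - 1) * (1 - F u)) - 1))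
    (hlim : Filter.Tendsto vM Filter.atTop (nhds vbar)) :
    Filter.Tendsto (fun M : ℕ => ((M : ℝ) - 1) * (1 - F (vM M)))
      Filter.atTop Filter.atTop := by
  set x : ℕ → ℝ := fun M => ((M : ℝ) - 1) * (1 - F (vM M)) with hx
  -- key inequality: for M ≥ 2, (vM M - p)/(vbar - vM M) ≤ exp (x M) - 1
  have key : ∀ M : ℕ, 2 ≤ M →
      (vM M - p) / (vbar - vM M) ≤ Real.exp (x M) - 1 := by
    intro M hM
    obtain ⟨h1, h2⟩ := hvM M hM
    have hsub : Set.Icc (vM M) vbar ⊆ Set.Icc 0 vbar := by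
      intro u hu
      exact ⟨le_trans (le_of_lt (lt_trans hp h1)) hu.1, hu.2⟩
    have hvMmem : vM M ∈ Set.Icc 0 vbar := ⟨le_of_lt (lt_trans hp h1), le_of_lt h2⟩
    have hM1 : (0:ℝ) ≤ (M:ℝ) - 1 := by
      have : (2:ℝ) ≤ M := by exact_mod_cast hM
      linarith
    have hbound : ∀ u ∈ Set.Icc (vM M) vbar,
        Real.exp (((M:ℝ) - 1) * (1 - F u)) - 1 ≤ Real.exp (x M) - 1 := by
      intro u hu
      have hFle' : F (vM M) ≤ F u := hFmono hvMmem (hsub hu) hu.1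
      have : ((M:ℝ) - 1) * (1 - F u) ≤ x M := by
        apply mul_le_mul_of_nonneg_left _ hM1
        linarith
      linarith [Real.exp_le_exp.2 this]
    have hcont : ContinuousOn (fun u => Real.exp (((M:ℝ) - 1) * (1 - F u)) - 1)
        (Set.Icc (vM M) vbar) := by
      apply ContinuousOn.sub _ continuousOn_const
      exact (Real.continuous_exp.comp_continuousOn
        ((continuousOn_const.sub (hFcont.mono hsub)).const_smul (((M:ℝ)-1))))
    have hint : IntervalIntegrable (fun u => Real.exp (((M:ℝ) - 1) * (1 - F u)) - 1)
        MeasureTheory.volume (vM M) vbar := by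
      apply ContinuousOn.intervalIntegrable
      rwa [Set.uIcc_of_le (le_of_lt h2)]
    have hle : vM M - p ≤ (Real.exp (x M) - 1) * (vbar - vM M) := by
      rw [hcutoff M hM]
      calc (∫ u in (vM M)..vbar, (Real.exp (((M : ℝ) - 1) * (1 - F u)) - 1))
          ≤ ∫ _u in (vM M)..vbar, (Real.exp (x M) - 1) := by
            apply intervalIntegral.integral_mono_on (le_of_lt h2) hint
              intervalIntegrable_const
            exact hbound
        _ = (Real.exp (x M) - 1) * (vbar - vM M) := by
            rw [intervalIntegral.integral_const, smul_eq_mul, mul_comm]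
    rw [div_le_iff₀ (by linarith)]
    linarith [hle]
  -- (vM - p)/(vbar - vM) → ∞
  have hdiv : Tendsto (fun M => (vM M - p) / (vbar - vM M)) atTop atTop := by
    have hnum : Tendsto (fun M => vM M - p) atTop (nhds (vbar - p)) :=
      hlim.sub_const p
    have hden : Tendsto (fun M => (vbar - vM M)⁻¹) atTop atTop := by
      apply tendsto_inv_nhdsGT_zero.comp
      apply tendsto_nhdsWithin_of_tendsto_nhds_of_eventually_within
      · have : Tendsto (fun M => vbar - vM M) atTop (nhds (vbar - vbar)) :=
          tendsto_const_nhds.sub hlim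
        simpa using this
      · filter_upwards [eventually_atTop.2 ⟨2, fun M hM => (hvM M hM).2⟩] with M h
        simpa using sub_pos.2 h
    have := hnum.pos_mul_atTop (by linarith) hden
    simpa [div_eq_mul_inv] using this
  -- hence log(1 + ratio) → ∞ and x M ≥ log(1 + ratio)
  have hlog : Tendsto (fun M => Real.log (1 + (vM M - p) / (vbar - vM M)))
      atTop atTop :=
    Real.tendsto_log_atTop.comp (tendsto_atTop_add_const_left _ 1 hdiv)
  apply tendsto_atTop_mono' atTop _ hlog
  filter_upwards [eventually_atTop.2 ⟨2, fun M (hM : 2 ≤ M) => key M hM⟩,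
    eventually_atTop.2 ⟨2, fun M (hM : 2 ≤ M) => hvM M hM⟩] with M h hmem
  have hpos : 0 < 1 + (vM M - p) / (vbar - vM M) := by
    have := div_pos (sub_pos.2 hmem.1) (sub_pos.2 hmem.2)
    linarith
  have : 1 + (vM M - p) / (vbar - vM M) ≤ Real.exp (x M) := by linarith
  calc Real.log (1 + (vM M - p) / (vbar - vM M)) ≤ Real.log (Real.exp (x M)) :=
        Real.log_le_log hpos this
    _ = x M := Real.log_exp _
end

section
/- For F uniform on [π, v̄], i.e., F(u) = (u-π)/(v̄-π), the cutoff equation v_M - π = ∫_{v_M}^{v̄}(e^{(M-1)(v̄-u)/(v̄-π)} - 1) du has the closed-form solution v_M = v̄ - (v̄-π)·(log M)/(M-1). -/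
open MeasureTheory intervalIntegral

/-- For the uniform distribution `F(u) = (u-p)/(v̄-p)` on `[p, v̄]`,
the cutoff `v_M = v̄ - (v̄-p)(log M)/(M-1)` solves the cutoff equation
`v_M - p = ∫_{v_M}^{v̄}(e^{(M-1)(v̄-u)/(v̄-p)} - 1) du`,
equivalently `e^{(M-1)(v̄-v_M)/(v̄-p)} = M`. -/
theorem uniform_cutoff_closed_form
    (p vbar : ℝ) (hp : 0 < p) (hpv : p < vbar)
    (M : ℕ) (hM : 2 ≤ M)
    (vM : ℝ)
    (hvM : vM = vbar - (vbar - p) * Real.log M / ((M : ℝ) - 1)) :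
    vM - p = (∫ u in vM..vbar,
        (Real.exp (((M : ℝ) - 1) * (vbar - u) / (vbar - p)) - 1)) ∧
    Real.exp (((M : ℝ) - 1) * (vbar - vM) / (vbar - p)) = (M : ℝ) := by
  have hvp : (0:ℝ) < vbar - p := by linarith
  have hM1 : (1:ℝ) < (M:ℝ) := by exact_mod_cast Nat.lt_of_lt_of_le Nat.one_lt_two hM
  have hMm1 : (0:ℝ) < (M:ℝ) - 1 := by linarith
  set c : ℝ := ((M:ℝ) - 1) / (vbar - p) with hc
  have hcpos : 0 < c := div_pos hMm1 hvp
  have harg : ∀ u : ℝ, ((M : ℝ) - 1) * (vbar - u) / (vbar - p) = c * (vbar - u) := by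
    intro u; rw [hc]; ring
  have hvvM : vbar - vM = (vbar - p) * Real.log M / ((M : ℝ) - 1) := by
    rw [hvM]; ring
  have hcv : c * (vbar - vM) = Real.log M := by
    rw [hvvM, hc]; field_simp
  have hexp : Real.exp (c * (vbar - vM)) = (M : ℝ) := by
    rw [hcv, Real.exp_log (by linarith)]
  refine ⟨?_, by rw [harg]; exact hexp⟩
  have hderiv : ∀ u ∈ Set.uIcc vM vbar, HasDerivAt
      (fun u => -Real.exp (c * (vbar - u)) / c - u)
      (Real.exp (c * (vbar - u)) - 1) u := by
    intro u _
    have h1 : HasDerivAt (fun u : ℝ => c * (vbar - u)) (-c) u := by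
      simpa using ((hasDerivAt_id u).const_sub vbar).const_mul c
    have h2 : HasDerivAt (fun u : ℝ => Real.exp (c * (vbar - u)))
        (Real.exp (c * (vbar - u)) * (-c)) u := (Real.hasDerivAt_exp _).comp u h1
    have h3 := ((h2.neg.div_const c).sub (hasDerivAt_id u))
    have h4 : (Real.exp (c * (vbar - u)) - 1) = -(Real.exp (c * (vbar - u)) * -c) / c - 1 := by
      rw [mul_neg, neg_neg, mul_div_assoc, div_self hcpos.ne', mul_one]
    rw [h4]; exact h3
  have hcont : IntervalIntegrable (fun u => Real.exp (c * (vbar - u)) - 1)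
      MeasureTheory.volume vM vbar := by
    apply Continuous.intervalIntegrable
    continuity
  have hint : (∫ u in vM..vbar, (Real.exp (c * (vbar - u)) - 1)) =
      (-Real.exp (c * (vbar - vbar)) / c - vbar) -
      (-Real.exp (c * (vbar - vM)) / c - vM) :=
    intervalIntegral.integral_eq_sub_of_hasDerivAt hderiv hcont
  have : (∫ u in vM..vbar,
      (Real.exp (((M : ℝ) - 1) * (vbar - u) / (vbar - p)) - 1)) =
      (∫ u in vM..vbar, (Real.exp (c * (vbar - u)) - 1)) := by
    congr 1; funext u; rw [harg]
  rw [this, hint, hexp]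
  have hcne : c ≠ 0 := ne_of_gt hcpos
  have hcinv : ((M:ℝ) - 1) / c = vbar - p := by
    rw [hc]; field_simp
  simp only [sub_self, mul_zero, Real.exp_zero]
  have : vM - p = ((M:ℝ) - 1) / c - (vbar - vM) := by
    rw [hcinv, hvvM, hvM]; ring
  rw [this]
  field_simp
  ring
end
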